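/- arXiv:2001.02323 — 3 statements merged into one kernel-verified Lean document; each statement's English description precedes it below -/
import Mathlib

section
/- Let g: [0,1] → ℝ be differentiable with g' being 2L-Lipschitz, and suppose g(a) > ε and g'(a) = 0 for some a ∈ [0,1]. Then g(b)² > ε²/9 for every b ∈ [0,1] with |a - b| ≤ sqrt(2ε/(3L)). -/
/-!
Since `g'` vanishes at `a` and is `2L`-Lipschitz, `|g' x| ≤ 2L|x - a|`, and comparing `g` with the
barrier `L (x - a)²` gives `|g b - g a| ≤ L (b - a)² ≤ 2ε/3`. Hence `g b > ε/3 > 0`.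
-/

open Set

variable {E : Type*} [NormedAddCommGroup E] [NormedSpace ℝ E] {f f' : ℝ → E} {K : ℝ}

theorem norm_image_sub_le_of_norm_deriv_le_mul_sub {c d : ℝ} (hcd : c ≤ d)
    (hf : ∀ x ∈ Icc c d, HasDerivAt f (f' x) x)
    (bound : ∀ x ∈ Ico c d, ‖f' x‖ ≤ 2 * K * (x - c)) :
    ‖f d - f c‖ ≤ K * (d - c) ^ 2 := by
  have hB : ∀ x, HasDerivAt (fun x => K * (x - c) ^ 2) (2 * K * (x - c)) x := fun x =>
    ((((hasDerivAt_id' x).sub_const c).pow 2).const_mul K).congr_deriv (by ring)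
  refine image_norm_le_of_norm_deriv_right_le_deriv_boundary (f := fun x => f x - f c)
    (fun x hx => ((hf x hx).sub_const (f c)).continuousAt.continuousWithinAt)
    (fun x hx => ((hf x (Ico_subset_Icc_self hx)).sub_const (f c)).hasDerivWithinAt)
    (by simp) hB bound (right_mem_Icc.2 hcd)

theorem norm_image_sub_le_of_norm_deriv_le_mul_abs_sub {a b : ℝ}
    (hf : ∀ x ∈ uIcc a b, HasDerivAt f (f' x) x)
    (bound : ∀ x ∈ uIcc a b, ‖f' x‖ ≤ 2 * K * |x - a|) :
    ‖f b - f a‖ ≤ K * (b - a) ^ 2 := by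
  rcases le_total a b with hab | hba
  · refine norm_image_sub_le_of_norm_deriv_le_mul_sub hab
      (fun x hx => hf x (Icc_subset_uIcc hx)) fun x hx => ?_
    simpa [abs_of_nonneg (sub_nonneg.2 hx.1)] using
      bound x (Icc_subset_uIcc (Ico_subset_Icc_self hx))
  · -- reflect `[b, a]` to `[-a, -b]` so that the bound grows away from the left endpoint
    have hmem : ∀ x ∈ Icc (-a) (-b), -x ∈ uIcc a b := fun x hx =>
      Icc_subset_uIcc' ⟨le_neg.1 hx.2, neg_le.1 hx.1⟩
    have h := norm_image_sub_le_of_norm_deriv_le_mul_sub (f := fun x => f (-x))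
      (f' := fun x => -f' (-x)) (K := K) (neg_le_neg hba)
      (fun x hx => by
        simpa [Function.comp_def] using (hf (-x) (hmem x hx)).scomp x (hasDerivAt_neg x))
      (fun x hx => by
        rw [norm_neg]
        have := bound (-x) (hmem x (Ico_subset_Icc_self hx))
        rwa [show -x - a = -(x - -a) by ring, abs_neg,
          abs_of_nonneg (sub_nonneg.2 hx.1)] at this)
    rwa [neg_neg, neg_neg, neg_sub_neg, ← neg_sq, neg_sub] at h

/-- If `g` is differentiable with a `2L`-Lipschitz derivative `g'`, `g a > ε`
and `g' a = 0`, then `g b ^ 2 > ε²/9` for every `b ∈ [0,1]` with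
`|a - b| ≤ √(2ε/(3L))`. -/
theorem stmt_5 (L ε : ℝ) (hL : 0 < L) (hε : 0 < ε) (g g' : ℝ → ℝ)
    (hderiv : ∀ x, HasDerivAt g (g' x) x)
    (hg' : ∀ x ∈ Set.Icc (0:ℝ) 1, ∀ y ∈ Set.Icc (0:ℝ) 1, |g' x - g' y| ≤ 2 * L * |x - y|)
    (a : ℝ) (ha : a ∈ Set.Icc (0:ℝ) 1) (hga : g a > ε) (hga' : g' a = 0) :
    ∀ b ∈ Set.Icc (0:ℝ) 1, |a - b| ≤ Real.sqrt (2 * ε / (3 * L)) →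
      (g b) ^ 2 > ε ^ 2 / 9 := by
  intro b hb hab
  have hquad : |g b - g a| ≤ L * (b - a) ^ 2 :=
    norm_image_sub_le_of_norm_deriv_le_mul_abs_sub (fun x _ => hderiv x) fun x hx => by
      simpa [hga'] using hg' x (uIcc_subset_Icc ha hb hx) a ha
  have hsq : (b - a) ^ 2 ≤ 2 * ε / (3 * L) := by
    rwa [← sq_abs, abs_sub_comm, ← Real.le_sqrt (abs_nonneg _) (by positivity)]
  have hdrop : L * (b - a) ^ 2 ≤ 2 * ε / 3 :=
    calc L * (b - a) ^ 2 ≤ L * (2 * ε / (3 * L)) := by gcongr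
      _ = 2 * ε / 3 := by field_simp
  have hgb : ε / 3 < g b := by linarith [(abs_le.1 hquad).1]
  calc ε ^ 2 / 9 = (ε / 3) ^ 2 := by ring
    _ < g b ^ 2 := by gcongr
end

section
/- Let g: [0,1] → ℝ be differentiable with g' being 2L-Lipschitz, and suppose g(a) > ε with a satisfying sqrt(2ε/(3L)) < a < 1 - sqrt(2ε/(3L)). Then the Lebesgue measure of the set {b ∈ [0,1] : g(b)² > ε²/9} is at least sqrt(2ε/(3L)). -/
/-!
Since `g'` is `2L`-Lipschitz, `g x ≥ g a + g' a (x - a) - L (x - a)²`. On the interval of length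
`r = √(2ε/(3L))` starting at `a` in the direction in which `g` does not decrease to first order
(`[a, a + r]` if `g' a ≥ 0`, `[a - r, a]` otherwise), the linear term is nonnegative and
`L (x - a)² ≤ L r² = 2ε/3`, so `g > ε - 2ε/3 = ε/3` there. The bounds on `a` keep this interval
inside `[0, 1]`.
-/

open MeasureTheory Set

theorem quadratic_lower_bound_of_deriv_ge_sub {g g' : ℝ → ℝ} {L a x : ℝ} (hax : a ≤ x)
    (hderiv : ∀ t ∈ Icc a x, HasDerivAt g (g' t) t)
    (hg' : ∀ t ∈ Icc a x, g' a - 2 * L * (t - a) ≤ g' t) :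
    g a + g' a * (x - a) - L * (x - a) ^ 2 ≤ g x := by
  have hderiv_aux : ∀ t ∈ Icc a x, HasDerivAt (fun t ↦ g t - g' a * t + L * (t - a) ^ 2)
      (g' t - g' a + 2 * L * (t - a)) t := fun t ht ↦
    (((hderiv t ht).sub ((hasDerivAt_id t).const_mul (g' a))).add
      ((((hasDerivAt_id t).sub_const a).pow 2).const_mul L)).congr_deriv (by
        simp only [mul_one, Nat.cast_ofNat, id_eq, Nat.add_one_sub_one, pow_one]; ring)
  have hmono := monotoneOn_of_hasDerivWithinAt_nonneg (convex_Icc a x)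
    (fun t ht ↦ (hderiv_aux t ht).continuousAt.continuousWithinAt)
    (fun t ht ↦ (hderiv_aux t (interior_subset ht)).hasDerivWithinAt)
    (fun t ht ↦ by linarith [hg' t (interior_subset ht)])
    (left_mem_Icc.2 hax) (right_mem_Icc.2 hax) hax
  simp only at hmono
  linarith

theorem quadratic_lower_bound_of_abs_deriv_sub_le {g g' : ℝ → ℝ} {L a x : ℝ}
    (hderiv : ∀ t ∈ uIcc a x, HasDerivAt g (g' t) t)
    (hg' : ∀ t ∈ uIcc a x, |g' t - g' a| ≤ 2 * L * |t - a|) :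
    g a + g' a * (x - a) - L * (x - a) ^ 2 ≤ g x := by
  rcases le_total a x with hax | hxa
  · rw [uIcc_of_le hax] at hderiv hg'
    refine quadratic_lower_bound_of_deriv_ge_sub hax hderiv fun t ht ↦ ?_
    have := neg_le_of_abs_le (hg' t ht)
    rw [abs_of_nonneg (sub_nonneg.2 ht.1)] at this
    linarith
  · rw [uIcc_of_ge hxa] at hderiv hg'
    have hmem : ∀ t ∈ Icc (-a) (-x), -t ∈ Icc x a := fun t ht ↦ ⟨le_neg.1 ht.2, neg_le.1 ht.1⟩
    -- the one-sided bound for `t ↦ g (-t)` on `[-a, -x]`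
    have key := quadratic_lower_bound_of_deriv_ge_sub (g := fun t ↦ g (-t))
      (g' := fun t ↦ -g' (-t)) (L := L) (neg_le_neg hxa)
      (fun t ht ↦ ((hderiv (-t) (hmem t ht)).comp t (hasDerivAt_neg t)).congr_deriv (by ring))
      (fun t ht ↦ by
        have := le_of_abs_le (hg' (-t) (hmem t ht))
        rw [abs_of_nonpos (by linarith [(hmem t ht).2])] at this
        simp only [neg_neg]
        linarith)
    simp only [neg_neg] at key
    linarith

theorem exists_Icc_mul_sub_nonneg (m a : ℝ) {r : ℝ} (hr : 0 ≤ r) :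
    ∃ c, a - r ≤ c ∧ c ≤ a ∧ ∀ b ∈ Icc c (c + r), 0 ≤ m * (b - a) := by
  rcases le_total 0 m with hm | hm
  · exact ⟨a, by linarith, le_rfl, fun b hb ↦ mul_nonneg hm (by linarith [hb.1])⟩
  · exact ⟨a - r, le_rfl, by linarith,
      fun b hb ↦ mul_nonneg_of_nonpos_of_nonpos hm (by linarith [hb.2])⟩

/-- If `g` is differentiable with a `2L`-Lipschitz derivative and `g a > ε` for
some `a` with `√(2ε/(3L)) < a < 1 - √(2ε/(3L))`, then the Lebesgue measure of
`{b ∈ [0,1] : g b ^ 2 > ε²/9}` is at least `√(2ε/(3L))`. -/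
theorem stmt_6 (L ε : ℝ) (hL : 0 < L) (hε : 0 < ε) (g g' : ℝ → ℝ)
    (hderiv : ∀ x, HasDerivAt g (g' x) x)
    (hg' : ∀ x ∈ Set.Icc (0:ℝ) 1, ∀ y ∈ Set.Icc (0:ℝ) 1, |g' x - g' y| ≤ 2 * L * |x - y|)
    (a : ℝ) (ha1 : Real.sqrt (2 * ε / (3 * L)) < a)
    (ha2 : a < 1 - Real.sqrt (2 * ε / (3 * L))) (hga : g a > ε) :
    volume {b ∈ Set.Icc (0:ℝ) 1 | (g b) ^ 2 > ε ^ 2 / 9}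
      ≥ ENNReal.ofReal (Real.sqrt (2 * ε / (3 * L))) := by
  set r := Real.sqrt (2 * ε / (3 * L))
  have hLr : L * r ^ 2 = 2 * ε / 3 := by
    rw [Real.sq_sqrt (by positivity)]
    field_simp
  obtain ⟨c, hac, hca, hslope⟩ := exists_Icc_mul_sub_nonneg (g' a) a (Real.sqrt_nonneg _)
  have hsub : Icc c (c + r) ⊆ {b ∈ Icc 0 1 | g b ^ 2 > ε ^ 2 / 9} := by
    intro b hb
    have hb01 : b ∈ Icc (0:ℝ) 1 := ⟨by linarith [hb.1], by linarith [hb.2]⟩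
    have hseg : uIcc a b ⊆ Icc 0 1 := uIcc_subset_Icc ⟨by linarith, by linarith⟩ hb01
    have htaylor := quadratic_lower_bound_of_abs_deriv_sub_le (fun t _ ↦ hderiv t)
      fun t ht ↦ hg' t (hseg ht) a (hseg left_mem_uIcc)
    have hdist : L * (b - a) ^ 2 ≤ L * r ^ 2 :=
      mul_le_mul_of_nonneg_left (sq_le_sq' (by linarith [hb.1]) (by linarith [hb.2])) hL.le
    have hgb : ε / 3 < g b := by linarith [hslope b hb]
    exact ⟨hb01, by nlinarith⟩
  calc ENNReal.ofReal r = volume (Icc c (c + r)) := by simp [Real.volume_Icc]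
    _ ≤ _ := measure_mono hsub
end

section
/- Let Z_i = -(f(A_i) - f₀(A_i))² + 2(f(A_i) - f₀(A_i))η_i where η_i is, conditionally on the past and A_i, mean-zero and (σ², b)-sub-exponential, and f, f₀ take values in [0, C]. Then the conditional cumulant generating function of Z_i - E[Z_i | past] satisfies ψ_i(λ) ≤ 2λ²(f(A_i) - f₀(A_i))²σ² for all |λ| ≤ 1/(2Cb). -/
open MeasureTheory ProbabilityTheory Real

/-! `Z - E Z = 2Δη` is a rescaling of `η` by `2Δ`, and `|λ| ≤ 1/(2Cb)` with `|Δ| ≤ C` keeps the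
rescaled parameter `2λΔ` within the sub-exponential range `|·| ≤ 1/b`. The bound is then the
sub-exponential MGF bound at `2λΔ`, read through the logarithm. -/

lemma cgf_le_of_mgf_le_exp {Ω : Type*} [MeasurableSpace Ω] {μ : Measure Ω} {X : Ω → ℝ}
    {t c : ℝ} (hc : 0 ≤ c) (h : mgf X μ t ≤ exp c) : cgf X μ t ≤ c := by
  rw [cgf]
  rcases mgf_nonneg.eq_or_lt with h0 | hpos
  · -- `mgf` is the junk value `0` when `exp (t * X)` is not integrable
    rwa [← h0, log_zero]
  · simpa using log_le_log hpos h

lemma abs_two_mul_mul_le_inv {l Δ C b : ℝ} (hb : 0 < b) (hl : |l| ≤ 1 / (2 * C * b))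
    (hΔ : |Δ| ≤ C) : |2 * l * Δ| ≤ 1 / b := by
  have hC : 0 ≤ C := (abs_nonneg Δ).trans hΔ
  calc |2 * l * Δ| = 2 * |l| * |Δ| := by simp [abs_mul]
    _ ≤ 2 * (1 / (2 * C * b)) * C := by gcongr
    _ = (C * C⁻¹) / b := by field_simp
    _ ≤ 1 / b := by gcongr; exact mul_inv_le_one

theorem stmt_15_general {Ω : Type*} [MeasurableSpace Ω] (μ : Measure Ω)
    (C σ2 b : ℝ) (hσ : 0 < σ2)
    (hb : 0 < b) (η : Ω → ℝ)
    (hsubexp : ∀ l : ℝ, |l| ≤ 1 / b →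
      ∫ ω, Real.exp (l * η ω) ∂μ ≤ Real.exp (l ^ 2 * σ2 / 2))
    (Δ : ℝ) (hΔ : |Δ| ≤ C)
    (Z : Ω → ℝ) (hZ : ∀ ω, Z ω = -Δ ^ 2 + 2 * Δ * η ω) :
    ∀ l : ℝ, |l| ≤ 1 / (2 * C * b) →
      Real.log (∫ ω, Real.exp (l * (Z ω - (-Δ ^ 2))) ∂μ)
        ≤ 2 * l ^ 2 * Δ ^ 2 * σ2 := by
  intro l hl
  have hcentered : ∀ ω, l * (Z ω - (-Δ ^ 2)) = (2 * l * Δ) * η ω := fun ω => by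
    rw [hZ ω]; ring
  have hmgf : mgf η μ (2 * l * Δ) ≤ exp ((2 * l * Δ) ^ 2 * σ2 / 2) :=
    hsubexp _ (abs_two_mul_mul_le_inv hb hl hΔ)
  calc Real.log (∫ ω, Real.exp (l * (Z ω - (-Δ ^ 2))) ∂μ) = cgf η μ (2 * l * Δ) := by
        simp only [hcentered, cgf, mgf]
    _ ≤ (2 * l * Δ) ^ 2 * σ2 / 2 := cgf_le_of_mgf_le_exp (by positivity) hmgf
    _ = 2 * l ^ 2 * Δ ^ 2 * σ2 := by ring

/-- Cumulant generating function bound: if `η` is mean-zero and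
`(σ², b)`-sub-exponential (conditionally on the past, here represented by the
given probability measure), `Δ = f(A_i) - f₀(A_i)` satisfies `|Δ| ≤ C`, and
`Z = -Δ² + 2Δη` with conditional mean `μ_Z = -Δ²`, then
`ψ(λ) = log E[exp(λ(Z - μ_Z))] ≤ 2λ²Δ²σ²` for all `|λ| ≤ 1/(2Cb)`. -/
theorem stmt_15 {Ω : Type*} [MeasurableSpace Ω] (μ : Measure Ω)
    [IsProbabilityMeasure μ] (C σ2 b : ℝ) (hC : 0 < C) (hσ : 0 < σ2)
    (hb : 0 < b) (η : Ω → ℝ) (hmeas : Measurable η)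
    (hmean : ∫ ω, η ω ∂μ = 0)
    (hsubexp : ∀ l : ℝ, |l| ≤ 1 / b →
      ∫ ω, Real.exp (l * η ω) ∂μ ≤ Real.exp (l ^ 2 * σ2 / 2))
    (Δ : ℝ) (hΔ : |Δ| ≤ C)
    (Z : Ω → ℝ) (hZ : ∀ ω, Z ω = -Δ ^ 2 + 2 * Δ * η ω) :
    ∀ l : ℝ, |l| ≤ 1 / (2 * C * b) →
      Real.log (∫ ω, Real.exp (l * (Z ω - (-Δ ^ 2))) ∂μ)
        ≤ 2 * l ^ 2 * Δ ^ 2 * σ2 :=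
  stmt_15_general μ C σ2 b hσ hb η hsubexp Δ hΔ Z hZ
end
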